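/- Let R be a commutative Noetherian local ring, X a resolving subcategory of finitely generated R-modules, and p a prime ideal. Suppose M is a finitely generated R-module such that M_p lies in the additive closure add_{R_p}(X_p) of the localizations of modules in X. Then there exists a short exact sequence 0 → N → X' → M → 0 of finitely generated R-modules with X' ∈ X such that the localized sequence 0 → N_p → X'_p → M_p → 0 splits. -/

import Mathlib

/-!
`M_p` is a direct summand of `X_p` for the finite product `X = ∏ Xᵢ`, which lies in `𝒳`.
Since `X` is finitely presented, the projection `X_p → M_p` is, up to a unit of `R_p`, the
localization of some `φ : X → M`, so `φ_p` is split surjective. Adding a free cover `Rⁿ → M`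
turns `φ` into a surjection `X × Rⁿ → M` from a module of `𝒳` that still splits at `p`;
`N` is its kernel.
-/

namespace LocalizedModule

theorem map_comp {R : Type*} [CommSemiring R] (S : Submonoid R) {M N P : Type*}
    [AddCommMonoid M] [Module R M] [AddCommMonoid N] [Module R N] [AddCommMonoid P] [Module R P]
    (f : M →ₗ[R] N) (g : N →ₗ[R] P) :
    map S (g ∘ₗ f) = map S g ∘ₗ map S f := by
  ext x
  induction x using LocalizedModule.induction_on with
  | h m s => simp

theorem exists_map_comp_eq_id_of_retraction {R : Type*} [CommRing R] (S : Submonoid R)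
    {M N : Type*} [AddCommGroup M] [Module R M] [AddCommGroup N] [Module R N]
    [Module.FinitePresentation R M]
    (π : LocalizedModule S M →ₗ[Localization S] LocalizedModule S N)
    (σ : LocalizedModule S N →ₗ[Localization S] LocalizedModule S M) (hπσ : π ∘ₗ σ = .id) :
    ∃ (φ : M →ₗ[R] N) (τ : LocalizedModule S N →ₗ[Localization S] LocalizedModule S M),
      map S φ ∘ₗ τ = .id := by
  obtain ⟨φ, s, hφ⟩ := Module.FinitePresentation.exists_lift_of_isLocalizedModule S
    (mkLinearMap S N) (π.restrictScalars R ∘ₗ mkLinearMap S M)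
  have hmap : map S φ = algebraMap R (Localization S) s • π := by
    apply LinearMap.restrictScalars_injective R
    apply IsLocalizedModule.linearMap_ext S (mkLinearMap S M) (mkLinearMap S N)
    ext m
    simpa [algebraMap_smul, Submonoid.smul_def] using LinearMap.congr_fun hφ m
  refine ⟨φ, IsLocalization.mk' (Localization S) (1 : R) s • σ, ?_⟩
  rw [LinearMap.comp_smul, hmap, LinearMap.smul_comp, hπσ, smul_smul,
    IsLocalization.mk'_spec, map_one, one_smul]

end LocalizedModule

section ResolvingSubcategory

variable {R : Type} [CommRing R] {S : Set (ModuleCat.{0} R)}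

theorem ModuleCat.of_prod_mem
    (hext : ∀ (A B C : ModuleCat.{0} R) (f : A →ₗ[R] B) (g : B →ₗ[R] C),
      Function.Injective f → Function.Surjective g →
      LinearMap.range f = LinearMap.ker g → A ∈ S → C ∈ S → B ∈ S)
    {A C : Type} [AddCommGroup A] [Module R A] [AddCommGroup C] [Module R C]
    (hA : ModuleCat.of R A ∈ S) (hC : ModuleCat.of R C ∈ S) : ModuleCat.of R (A × C) ∈ S :=
  hext (.of R A) (.of R (A × C)) (.of R C) (LinearMap.inl R A C) (LinearMap.snd R A C)
    LinearMap.inl_injective LinearMap.snd_surjective (LinearMap.range_inl R A C) hA hC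

theorem ModuleCat.of_pi_mem
    (hiso : ∀ A B : ModuleCat.{0} R, A ∈ S → Nonempty (A ≃ₗ[R] B) → B ∈ S)
    (hR : ModuleCat.of R R ∈ S)
    (hsummand : ∀ A B C : ModuleCat.{0} R, A ∈ S →
      Nonempty (A ≃ₗ[R] (↥B × ↥C)) → B ∈ S)
    (hext : ∀ (A B C : ModuleCat.{0} R) (f : A →ₗ[R] B) (g : B →ₗ[R] C),
      Function.Injective f → Function.Surjective g →
      LinearMap.range f = LinearMap.ker g → A ∈ S → C ∈ S → B ∈ S)
    {ι : Type} [Finite ι] (M : ι → Type) [∀ i, AddCommGroup (M i)] [∀ i, Module R (M i)]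
    (hM : ∀ i, ModuleCat.of R (M i) ∈ S) : ModuleCat.of R (∀ i, M i) ∈ S :=
  Module.pi_induction' R (fun N _ _ ↦ ModuleCat.of R N ∈ S) (fun N _ _ ↦ ModuleCat.of R N ∈ S)
    (fun e hN ↦ hiso _ _ hN ⟨e⟩) (fun e hN ↦ hiso _ _ hN ⟨e⟩)
    (hsummand (.of R R) (.of R PUnit) (.of R R) hR ⟨LinearEquiv.uniqueProd.symm⟩)
    (fun hN hN' ↦ of_prod_mem hext hN hN') M hM

end ResolvingSubcategory

theorem exists_ses_splitting_at_prime_of_localization_in_add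
    (R : Type) [CommRing R] [IsNoetherianRing R]
    (S : Set (ModuleCat.{0} R))
    (hfg : ∀ A ∈ S, Module.Finite R ↥A)
    (hiso : ∀ A B : ModuleCat.{0} R, A ∈ S → Nonempty (A ≃ₗ[R] B) → B ∈ S)
    (hR : ModuleCat.of R R ∈ S)
    (hsummand : ∀ A B C : ModuleCat.{0} R, A ∈ S →
      Nonempty (A ≃ₗ[R] (↥B × ↥C)) → B ∈ S)
    (hext : ∀ (A B C : ModuleCat.{0} R) (f : A →ₗ[R] B) (g : B →ₗ[R] C),
      Function.Injective f → Function.Surjective g →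
      LinearMap.range f = LinearMap.ker g → A ∈ S → C ∈ S → B ∈ S)
    (p : Ideal R) [p.IsPrime]
    (M : Type) [AddCommGroup M] [Module R M] [Module.Finite R M]
    (hMp : ∃ (k : ℕ) (Xs : Fin k → ModuleCat.{0} R), (∀ i, Xs i ∈ S) ∧
      ∃ L : ModuleCat.{0} (Localization p.primeCompl),
        Nonempty ((Π i, LocalizedModule p.primeCompl ↥(Xs i))
          ≃ₗ[Localization p.primeCompl]
            ((LocalizedModule p.primeCompl M) × ↥L))) :
    ∃ (X' : ModuleCat.{0} R), X' ∈ S ∧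
      ∃ (N : ModuleCat.{0} R) (u : ↥N →ₗ[R] ↥X') (v : ↥X' →ₗ[R] M),
        Function.Injective u ∧ Function.Surjective v ∧
        LinearMap.range u = LinearMap.ker v ∧
        ∃ h : LocalizedModule p.primeCompl M →ₗ[Localization p.primeCompl]
            LocalizedModule p.primeCompl ↥X',
          (LocalizedModule.map p.primeCompl v) ∘ₗ h = LinearMap.id := by
  obtain ⟨k, Xs, hXs, L, ⟨e⟩⟩ := hMp
  let X := ∀ i, Xs i
  have (i : Fin k) : Module.Finite R (Xs i) := hfg _ (hXs i)
  have : Module.FinitePresentation R X := Module.finitePresentation_of_finite R X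
  let eX : LocalizedModule p.primeCompl X ≃ₗ[Localization p.primeCompl]
      Π i, LocalizedModule p.primeCompl (Xs i) :=
    LinearEquiv.extendScalarsOfIsLocalization p.primeCompl (Localization p.primeCompl)
      (IsLocalizedModule.iso p.primeCompl
        (.pi fun i ↦ LocalizedModule.mkLinearMap p.primeCompl (Xs i) ∘ₗ .proj i))
  obtain ⟨φ, τ, hφτ⟩ := LocalizedModule.exists_map_comp_eq_id_of_retraction p.primeCompl
    (.fst _ _ L ∘ₗ e.toLinearMap ∘ₗ eX.toLinearMap)
    (eX.symm.toLinearMap ∘ₗ e.symm.toLinearMap ∘ₗ .inl _ _ L)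
    (by ext; simp)
  obtain ⟨n, f, hf⟩ := Module.Finite.exists_fin' R M
  have hX : ModuleCat.of R X ∈ S := ModuleCat.of_pi_mem hiso hR hsummand hext _ hXs
  have hF : ModuleCat.of R (Fin n → R) ∈ S :=
    ModuleCat.of_pi_mem hiso hR hsummand hext _ fun _ ↦ hR
  refine ⟨.of R (X × (Fin n → R)), ModuleCat.of_prod_mem hext hX hF,
    .of R (LinearMap.ker (φ.coprod f)), (LinearMap.ker _).subtype, φ.coprod f,
    Submodule.injective_subtype _, ?_, Submodule.range_subtype _,
    LocalizedModule.map _ (.inl R X (Fin n → R)) ∘ₗ τ, ?_⟩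
  · rw [← LinearMap.range_eq_top, LinearMap.range_coprod, LinearMap.range_eq_top.2 hf, sup_top_eq]
  · rw [← LinearMap.comp_assoc, ← LocalizedModule.map_comp, LinearMap.coprod_inl, hφτ]
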